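/- arXiv:1806.10559 — 6 statements merged into one kernel-verified Lean document; each statement's English description precedes it below -/
import Mathlib

section
/- Let d ∈ ℕ and let (A, C) be a random element of ℝ^{d×d} × ℝ^d on a probability space. Assume: (i) A is invertible almost surely; (ii) for every x ∈ ℝ^d, P(Ax + C = x) < 1; (iii) there exists a d-dimensional random vector X, independent of (A, C), whose law equals the law of AX + C, and any d-dimensional random vector X′ independent of (A, C) whose law equals the law of AX′ + C has the same law as X. Then the law of X has no atoms, and it is of pure type: it is either absolutely continuous or singular with respect to d-dimensional Lebesgue measure. -/
/-!
Let `ξ` be the law of `X` and let `F ν` be the law of `A Y + C` for `Y ∼ ν` independent of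
`(A, C)`, so that `F ξ = ξ`. Almost surely `y ↦ A y + C` is an affine bijection, so it is
injective and pulls back Lebesgue-null sets to null sets.

No atoms: if `ξ` had atoms, the finitely many atoms of maximal mass `p` would almost surely be
permuted by `y ↦ A y + C`, because the mass `p` of such an atom is the average over `(A, C)` of the
mass of its preimage, which is at most `p`. An affine bijection of a finite set fixes its
centroid, so the centroid would be an almost sure fixed point, contradicting (ii).

Pure type: let `ξ = ξₛ + ξₐ` be the Lebesgue decomposition. Then `F ξₐ` is absolutely continuous
and `F ξₐ ≤ F ξ = ξ`, so `F ξₐ ≤ ξₐ`. Both have the same total mass, so `F ξₐ = ξₐ`. If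
`ξₐ ≠ 0`, normalising it gives a fixed probability measure, which by uniqueness is `ξ`.
-/

open MeasureTheory ProbabilityTheory
open scoped ENNReal

lemma AffineMap.apply_centroid_eq_of_image_eq {k V P : Type*} [DivisionRing k] [CharZero k]
    [AddCommGroup V] [Module k V] [AddTorsor V P] [DecidableEq P] (f : P →ᵃ[k] P)
    {s : Finset P} (hs : s.Nonempty) (hf : s.image f = s) :
    f (s.centroid k _root_.id) = s.centroid k _root_.id := by
  rw [Finset.centroid_def,
    s.map_affineCombination _ _ (s.sum_centroidWeights_eq_one_of_nonempty k hs),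
    ← Finset.centroid_def]
  have hinj : Set.InjOn f s := Finset.card_image_iff.mp (by rw [hf])
  exact Finset.centroid_eq_of_inj_on_of_image_eq k s s (fun i hi j hj h => hinj hi hj h)
    (fun i _ j _ h => h) (by simp [← Finset.coe_image, hf])

namespace MeasureTheory.Measure

variable {E G : Type*} [MeasurableSpace E] [MeasurableSpace G]

lemma AbsolutelyContinuous.le_withDensity_rnDeriv_of_le {ν ρ ξ : Measure E}
    [ξ.HaveLebesgueDecomposition ρ] (hνρ : ν ≪ ρ) (hνξ : ν ≤ ξ) :
    ν ≤ ρ.withDensity (ξ.rnDeriv ρ) := by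
  have hsing := mutuallySingular_singularPart ξ ρ
  set s := hsing.nullSet
  calc ν = ν.restrict s := (restrict_eq_self_of_ae_mem (hνρ hsing.measure_compl_nullSet)).symm
    _ ≤ ξ.restrict s := restrict_mono subset_rfl hνξ
    _ = (ρ.withDensity (ξ.rnDeriv ρ)).restrict s := by
      conv_lhs => rw [← singularPart_add_rnDeriv ξ ρ]
      rw [restrict_add, hsing.restrict_nullSet, zero_add]
    _ ≤ ρ.withDensity (ξ.rnDeriv ρ) := restrict_le_self

section Atoms

variable [MeasurableSingletonClass E] (ξ : Measure E) [IsFiniteMeasure ξ]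

lemma finite_setOf_le_measure_singleton {ε : ℝ≥0∞} (hε : ε ≠ 0) :
    {x | ε ≤ ξ {x}}.Finite :=
  finite_const_le_meas_of_disjoint_iUnion ξ (pos_iff_ne_zero.mpr hε) measurableSet_singleton
    (fun _ _ hxy => Set.disjoint_singleton.mpr hxy) (measure_ne_top _ _)

lemma exists_forall_measure_singleton_le {x₀ : E} (hx₀ : ξ {x₀} ≠ 0) :
    ∃ x, ∀ y, ξ {y} ≤ ξ {x} := by
  obtain ⟨x, hx, hmax⟩ := Set.exists_max_image _ (fun x => ξ {x})
    (finite_setOf_le_measure_singleton ξ hx₀) ⟨x₀, show ξ {x₀} ≤ ξ {x₀} from le_rfl⟩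
  exact ⟨x, fun y => (le_total (ξ {x₀}) (ξ {y})).elim (hmax y) fun h => h.trans hx⟩

end Atoms

/-- The law of `T (Y, g)` for independent `Y ∼ ν` and `g ∼ μ` (the `F ν` above, with
`T (y, (a, c)) = a y + c`). -/
noncomputable def randomPushforward (T : E × G → E) (μ : Measure G) (ν : Measure E) :
    Measure E :=
  (ν.prod μ).map T

section randomPushforward

variable {T : E × G → E} {μ : Measure G} {ν ν₁ ν₂ ρ : Measure E}

lemma randomPushforward_apply [SFinite μ] [SFinite ν] (hT : Measurable T) {s : Set E}
    (hs : MeasurableSet s) :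
    randomPushforward T μ ν s = ∫⁻ g, ν ((fun y => T (y, g)) ⁻¹' s) ∂μ := by
  rw [randomPushforward, map_apply hT hs, prod_apply_symm (hT hs)]
  rfl

lemma randomPushforward_apply_univ [IsProbabilityMeasure μ] (hT : Measurable T) :
    randomPushforward T μ ν Set.univ = ν Set.univ := by
  rw [randomPushforward, map_apply hT MeasurableSet.univ, Set.preimage_univ,
    ← Set.univ_prod_univ, prod_prod, measure_univ (μ := μ), mul_one]

lemma randomPushforward_add [SFinite μ] [SFinite ν₁] [SFinite ν₂] (hT : Measurable T) :
    randomPushforward T μ (ν₁ + ν₂) = randomPushforward T μ ν₁ + randomPushforward T μ ν₂ := by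
  rw [randomPushforward, add_prod, Measure.map_add _ _ hT]
  rfl

lemma randomPushforward_smul [SFinite μ] (c : ℝ≥0∞) :
    randomPushforward T μ (c • ν) = c • randomPushforward T μ ν := by
  rw [randomPushforward, prod_smul_left, Measure.map_smul]
  rfl

lemma randomPushforward_absolutelyContinuous [SFinite μ] [SFinite ν] (hT : Measurable T)
    (hT_qmp : ∀ᵐ g ∂μ, QuasiMeasurePreserving (fun y => T (y, g)) ρ ρ) (hν : ν ≪ ρ) :
    randomPushforward T μ ν ≪ ρ := by
  refine AbsolutelyContinuous.mk fun s hs hρs => ?_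
  rw [randomPushforward_apply hT hs]
  refine (lintegral_congr_ae ?_).trans lintegral_zero
  filter_upwards [hT_qmp] with g hg
  exact hν (hg.preimage_null hρs)

lemma randomPushforward_withDensity_rnDeriv_of_eq [IsProbabilityMeasure μ] [SigmaFinite ρ]
    {ξ : Measure E} [IsFiniteMeasure ξ] (hT : Measurable T)
    (hT_qmp : ∀ᵐ g ∂μ, QuasiMeasurePreserving (fun y => T (y, g)) ρ ρ)
    (hξ : randomPushforward T μ ξ = ξ) :
    randomPushforward T μ (ρ.withDensity (ξ.rnDeriv ρ)) = ρ.withDensity (ξ.rnDeriv ρ) := by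
  have hac : randomPushforward T μ (ρ.withDensity (ξ.rnDeriv ρ)) ≪ ρ :=
    randomPushforward_absolutelyContinuous hT hT_qmp (withDensity_absolutelyContinuous _ _)
  have hle : randomPushforward T μ (ρ.withDensity (ξ.rnDeriv ρ)) ≤ ξ := by
    conv_rhs => rw [← hξ, ← singularPart_add_rnDeriv ξ ρ, randomPushforward_add hT]
    exact Measure.le_add_left le_rfl
  have := isFiniteMeasure_of_le ξ hle
  exact eq_of_le_of_measure_univ_eq (hac.le_withDensity_rnDeriv_of_le hle)
    (randomPushforward_apply_univ hT)

lemma absolutelyContinuous_or_mutuallySingular_of_randomPushforward_eq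
    [IsProbabilityMeasure μ] [SigmaFinite ρ] {ξ : Measure E} [IsProbabilityMeasure ξ]
    (hT : Measurable T) (hT_qmp : ∀ᵐ g ∂μ, QuasiMeasurePreserving (fun y => T (y, g)) ρ ρ)
    (hξ : randomPushforward T μ ξ = ξ)
    (huniq : ∀ ν : Measure E, IsProbabilityMeasure ν → randomPushforward T μ ν = ν → ν = ξ) :
    ξ ≪ ρ ∨ ξ ⟂ₘ ρ := by
  set ξₐ := ρ.withDensity (ξ.rnDeriv ρ)
  by_cases h0 : ξₐ = 0
  · exact Or.inr ((withDensity_rnDeriv_eq_zero ξ ρ).mp h0)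
  · have : NeZero ξₐ := ⟨h0⟩
    have hfix : randomPushforward T μ ((ξₐ Set.univ)⁻¹ • ξₐ) = (ξₐ Set.univ)⁻¹ • ξₐ := by
      rw [randomPushforward_smul, randomPushforward_withDensity_rnDeriv_of_eq hT hT_qmp hξ]
    rw [← huniq _ inferInstance hfix]
    exact Or.inl ((withDensity_absolutelyContinuous _ _).smul_left _)

section Atoms

variable [MeasurableSingletonClass E] [IsProbabilityMeasure μ] {ξ : Measure E}
  [IsFiniteMeasure ξ]

lemma ae_exists_preimage_of_forall_measure_singleton_le (hT : Measurable T)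
    (hT_inj : ∀ᵐ g ∂μ, Function.Injective fun y => T (y, g))
    (hξ : randomPushforward T μ ξ = ξ) {x : E} (hx : ξ {x} ≠ 0) (hmax : ∀ y, ξ {y} ≤ ξ {x}) :
    ∀ᵐ g ∂μ, ∃ y, T (y, g) = x ∧ ξ {y} = ξ {x} := by
  set f : G → ℝ≥0∞ := fun g => ξ ((fun y => T (y, g)) ⁻¹' {x})
  have hfiber : ∀ᵐ g ∂μ, f g = 0 ∨ ∃ y, T (y, g) = x ∧ f g = ξ {y} := by
    filter_upwards [hT_inj] with g hg
    rcases ((Set.subsingleton_singleton (a := x)).preimage hg).eq_empty_or_singleton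
      with h | ⟨y, h⟩
    · exact Or.inl (by simp only [f, h, measure_empty])
    · exact Or.inr ⟨y, (h ▸ Set.mem_singleton y : y ∈ _), by simp only [f, h]⟩
  have hf_le : ∀ᵐ g ∂μ, f g ≤ ξ {x} := by
    filter_upwards [hfiber] with g hg
    rcases hg with h0 | ⟨y, -, hy⟩
    · exact h0.le.trans bot_le
    · exact hy ▸ hmax y
  have hf_int : ∫⁻ g, f g ∂μ = ξ {x} := by
    rw [← randomPushforward_apply hT (measurableSet_singleton x), hξ]
  have hf_eq : f =ᵐ[μ] fun _ => ξ {x} :=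
    ae_eq_of_ae_le_of_lintegral_le hf_le (hf_int ▸ measure_ne_top _ _) aemeasurable_const
      (by rw [lintegral_const, measure_univ, mul_one, hf_int])
  filter_upwards [hfiber, hf_eq] with g hg hfg
  rcases hg with h0 | ⟨y, hy, hfy⟩
  · exact absurd (hfg ▸ h0) hx
  · exact ⟨y, hy, hfy.symm.trans hfg⟩

lemma exists_finset_ae_image_eq [DecidableEq E] (hT : Measurable T)
    (hT_inj : ∀ᵐ g ∂μ, Function.Injective fun y => T (y, g))
    (hξ : randomPushforward T μ ξ = ξ) {x₀ : E} (hx₀ : ξ {x₀} ≠ 0) :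
    ∃ S : Finset E, S.Nonempty ∧ ∀ᵐ g ∂μ, S.image (fun y => T (y, g)) = S := by
  obtain ⟨xₘ, hmax⟩ := exists_forall_measure_singleton_le ξ hx₀
  have hp : ξ {xₘ} ≠ 0 := ne_bot_of_le_ne_bot hx₀ (hmax x₀)
  set S := (finite_setOf_le_measure_singleton ξ hp).toFinset
  have hS : ∀ x ∈ S, ξ {x} = ξ {xₘ} := fun x hx =>
    le_antisymm (hmax x) (by simpa [S] using hx)
  refine ⟨S, ⟨xₘ, by simp [S]⟩, ?_⟩
  filter_upwards [(Filter.eventually_all_finset S).mpr fun x hx =>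
    ae_exists_preimage_of_forall_measure_singleton_le hT hT_inj hξ ((hS x hx).symm ▸ hp)
      ((hS x hx).symm ▸ hmax)] with g hg
  refine (Finset.eq_of_subset_of_card_le (fun x hx => ?_) Finset.card_image_le).symm
  obtain ⟨y, hy, hξy⟩ := hg x hx
  exact Finset.mem_image.mpr ⟨y, by simp [S, hξy, hS x hx], hy⟩

lemma measure_singleton_eq_zero_of_randomPushforward_eq {k V : Type*} [Field k] [CharZero k]
    [AddCommGroup V] [Module k V] [AddTorsor V E] (hT : Measurable T) (f : G → E →ᵃ[k] E)
    (hTf : ∀ y g, T (y, g) = f g y) (hf_inj : ∀ᵐ g ∂μ, Function.Injective (f g))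
    (hξ : randomPushforward T μ ξ = ξ) (hT_fix : ∀ x, ¬ ∀ᵐ g ∂μ, T (x, g) = x) (x : E) :
    ξ {x} = 0 := by
  classical
  by_contra hx
  have hT_inj : ∀ᵐ g ∂μ, Function.Injective fun y => T (y, g) := by
    simpa only [hTf] using hf_inj
  obtain ⟨S, hS, hS_perm⟩ := exists_finset_ae_image_eq hT hT_inj hξ hx
  refine hT_fix (S.centroid k id) ?_
  filter_upwards [hS_perm] with g hg
  simp only [hTf] at hg ⊢
  exact (f g).apply_centroid_eq_of_image_eq hS hg

end Atoms

end randomPushforward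

end MeasureTheory.Measure

namespace Matrix

variable {n : Type*} [Fintype n] [DecidableEq n]

noncomputable def affineMap {R : Type*} [CommRing R] (a : Matrix n n R) (c : n → R) :
    (n → R) →ᵃ[R] (n → R) :=
  (toLin' a).toAffineMap + AffineMap.const R (n → R) c

@[simp]
lemma affineMap_apply {R : Type*} [CommRing R] (a : Matrix n n R) (c y : n → R) :
    a.affineMap c y = a *ᵥ y + c := rfl

lemma affineMap_injective {K : Type*} [Field K] {a : Matrix n n K} (ha : a.det ≠ 0)
    (c : n → K) : Function.Injective (a.affineMap c) :=
  (add_left_injective c).comp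
    (mulVec_injective_iff_isUnit.mpr ((isUnit_iff_isUnit_det a).mpr (isUnit_iff_ne_zero.mpr ha)))

lemma quasiMeasurePreserving_affineMap {a : Matrix n n ℝ} (ha : a.det ≠ 0) (c : n → ℝ) :
    Measure.QuasiMeasurePreserving (a.affineMap c) volume volume :=
  (measurePreserving_add_right volume c).quasiMeasurePreserving.comp
    (Measure.LinearMap.quasiMeasurePreserving volume (toLin' a) (by rwa [LinearMap.det_toLin']))

end Matrix

/-- **Atomlessness and pure type of solutions of stochastic fixed point equations**
(Buraczewski–Damek–Mikosch). Let `(A, C)` be a random element of `ℝ^{d×d} × ℝ^d` such that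
(i) `A` is almost surely invertible; (ii) `P(Ax + C = x) < 1` for every `x ∈ ℝ^d`; and
(iii) there is a random vector `X`, independent of `(A, C)`, whose law equals the law of
`AX + C`, and the law of `X` is the unique probability distribution `ξ'` with this fixed point
property (expressed canonically: the pushforward of `ξ' ⊗ law(A,C)` under
`(x, (a, c)) ↦ a x + c` is `ξ'`). Then the law of `X` has no atoms, and it is of pure type:
it is either absolutely continuous or singular with respect to Lebesgue measure on `ℝ^d`. -/
theorem stmt1 {Ω : Type*} [MeasurableSpace Ω] (P : Measure Ω) [IsProbabilityMeasure P]
    (d : ℕ) (A : Ω → Fin d → Fin d → ℝ) (C : Ω → Fin d → ℝ)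
    (hA : Measurable A) (hC : Measurable C)
    (hinv : ∀ᵐ ω ∂P, (Matrix.of (A ω)).det ≠ 0)
    (hnofix : ∀ x : Fin d → ℝ, P {ω | (fun i => ∑ j, A ω i j * x j) + C ω = x} < 1)
    (X : Ω → Fin d → ℝ) (hX : Measurable X)
    (hindep : IndepFun X (fun ω => (A ω, C ω)) P)
    (hsol : Measure.map X P = Measure.map (fun ω => (fun i => ∑ j, A ω i j * X ω j) + C ω) P)
    (huniq : ∀ ξ' : Measure (Fin d → ℝ), IsProbabilityMeasure ξ' →
      Measure.map
          (fun q : (Fin d → ℝ) × ((Fin d → Fin d → ℝ) × (Fin d → ℝ)) =>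
            (fun i => ∑ j, q.2.1 i j * q.1 j) + q.2.2)
          (ξ'.prod (Measure.map (fun ω => (A ω, C ω)) P)) = ξ' →
        ξ' = Measure.map X P) :
    (∀ x : Fin d → ℝ, Measure.map X P {x} = 0) ∧
      (Measure.map X P ≪ (volume : Measure (Fin d → ℝ)) ∨
        (Measure.map X P).MutuallySingular (volume : Measure (Fin d → ℝ))) := by
  let T : (Fin d → ℝ) × ((Fin d → Fin d → ℝ) × (Fin d → ℝ)) → Fin d → ℝ :=
    fun q => (fun i => ∑ j, q.2.1 i j * q.1 j) + q.2.2
  have hT : Measurable T := by fun_prop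
  have hAC : Measurable fun ω => (A ω, C ω) := hA.prodMk hC
  set μ := P.map fun ω => (A ω, C ω)
  have := Measure.isProbabilityMeasure_map (μ := P) hX.aemeasurable
  have := Measure.isProbabilityMeasure_map (μ := P) hAC.aemeasurable
  have hfix : Measure.randomPushforward T μ (P.map X) = P.map X := by
    rw [Measure.randomPushforward, ← (indepFun_iff_map_prod_eq_prod_map_map hX.aemeasurable
      hAC.aemeasurable).mp hindep, Measure.map_map hT (hX.prodMk hAC)]
    exact hsol.symm
  have hT_affine (z : (Fin d → Fin d → ℝ) × (Fin d → ℝ)) :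
      (fun y => T (y, z)) = (Matrix.of z.1).affineMap z.2 := by
    ext y i
    simp [T, Matrix.mulVec, dotProduct]
  have hdet : ∀ᵐ z ∂μ, (Matrix.of z.1).det ≠ 0 :=
    (ae_map_iff hAC.aemeasurable ((measurableSet_singleton 0).compl.preimage
      (Continuous.matrix_det (by exact continuous_fst)).measurable)).mpr hinv
  have hnofix_ae : ∀ x, ¬ ∀ᵐ z ∂μ, T (x, z) = x := fun x hx => by
    have hmeas : MeasurableSet {z | T (x, z) = x} :=
      measurableSet_eq_fun (by fun_prop) measurable_const
    have hPx : P {ω | T (x, (A ω, C ω)) = x} = P Set.univ :=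
      (ae_iff_measure_eq (hmeas.preimage hAC).nullMeasurableSet).mp
        ((ae_map_iff hAC.aemeasurable hmeas).mp hx)
    exact (hnofix x).ne (hPx.trans measure_univ)
  exact ⟨Measure.measure_singleton_eq_zero_of_randomPushforward_eq hT
      (fun z => (Matrix.of z.1).affineMap z.2) (fun y z => congrFun (hT_affine z) y)
      (hdet.mono fun z hz => Matrix.affineMap_injective hz z.2) hfix hnofix_ae,
    Measure.absolutelyContinuous_or_mutuallySingular_of_randomPushforward_eq hT
      (hdet.mono fun z hz => hT_affine z ▸ Matrix.quasiMeasurePreserving_affineMap hz z.2)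
      hfix huniq⟩
end

section
/- Let d ∈ ℕ, let A ∈ ℝ^{d×d} have spectral radius r(A) < 1, and let C be a d-dimensional random vector with E‖C‖ < ∞. If X is a d-dimensional random vector, independent of C, whose distribution equals the distribution of AX + C, then necessarily the distribution of X equals the distribution of Σ_{k=0}^∞ A^k C_k, where (C_k)_{k≥0} are independent copies of C. In particular, the solution of the distributional fixed point equation X =_d AX + C is unique in distribution. -/
/-!
Let `T` be the operator of `A`. Gelfand's formula turns `r(A) < 1` into summability of `‖T ^ k‖`,
so the terms of `∑ T ^ k C_k` have summable `L¹` norms and the series converges almost surely.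
Iterating the fixed point equation with independent copies of `C` writes `law X`, for every `n`,
as the convolution of its image under `T ^ n` with the law of `∑_{k<n} T ^ k C_k`. On the product
of `law X` with the space carrying the `C_k`, these are the laws of `T ^ n x + ∑_{k<n} T ^ k C_k`,
which converge almost surely to `∑ T ^ k C_k` because `T ^ n x → 0`; and a constant sequence of
laws has only one weak limit.
-/

open MeasureTheory ProbabilityTheory Filter Topology
open scoped ENNReal NNReal

theorem summable_norm_pow_of_spectralRadius_lt_one {A : Type*} [NormedRing A] [NormedAlgebra ℂ A]
    [CompleteSpace A] (a : A) (ha : spectralRadius ℂ a < 1) :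
    Summable fun n => ‖a ^ n‖ := by
  obtain ⟨ρ, hρa, hρ1⟩ := ENNReal.lt_iff_exists_nnreal_btwn.1 ha
  have hroot : ∀ᶠ n : ℕ in atTop, (‖a ^ n‖₊ : ℝ≥0∞) ^ (1 / n : ℝ) < ρ :=
    (spectrum.pow_nnnorm_pow_one_div_tendsto_nhds_spectralRadius a).eventually_lt_const hρa
  refine Summable.of_norm_bounded_eventually_nat (NNReal.summable_coe.2 <|
    NNReal.summable_geometric (ENNReal.coe_lt_one_iff.1 hρ1)) ?_
  filter_upwards [hroot, eventually_gt_atTop 0] with n hn hn0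
  have hn' : (0 : ℝ) < n := Nat.cast_pos.2 hn0
  rw [← ENNReal.coe_rpow_of_nonneg _ (by positivity), ENNReal.coe_lt_coe, one_div,
    NNReal.rpow_inv_lt_iff hn', NNReal.rpow_natCast] at hn
  simpa using (NNReal.coe_lt_coe.2 hn).le

theorem Matrix.norm_toEuclideanCLM_le_norm_map_ofReal {n : Type*} [Fintype n] [DecidableEq n]
    (B : Matrix n n ℝ) :
    ‖Matrix.toEuclideanCLM (𝕜 := ℝ) B‖
      ≤ ‖Matrix.toEuclideanCLM (𝕜 := ℂ) (B.map Complex.ofReal)‖ := by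
  let j : EuclideanSpace ℝ n → EuclideanSpace ℂ n := fun x => WithLp.toLp 2 fun i => (x i : ℂ)
  have hj : ∀ x, ‖j x‖ = ‖x‖ := fun x => by simp [j, EuclideanSpace.norm_eq, Complex.norm_real]
  have hBj : ∀ x, Matrix.toEuclideanCLM (𝕜 := ℂ) (B.map Complex.ofReal) (j x)
      = j (Matrix.toEuclideanCLM (𝕜 := ℝ) B x) := fun x => by
    ext i
    simp [j, Matrix.mulVec, dotProduct]
  refine ContinuousLinearMap.opNorm_le_bound _ (norm_nonneg _) fun x => ?_
  simpa only [← hj, hBj] using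
    (Matrix.toEuclideanCLM (𝕜 := ℂ) (B.map Complex.ofReal)).le_opNorm (j x)

theorem Matrix.summable_norm_toEuclideanCLM_pow {n : Type*} [Fintype n] [DecidableEq n]
    (A : Matrix n n ℝ) (hA : spectralRadius ℂ (A.map Complex.ofReal) < 1) :
    Summable fun k => ‖Matrix.toEuclideanCLM (𝕜 := ℝ) A ^ k‖ := by
  let M := Matrix.toEuclideanCLM (𝕜 := ℂ) (A.map Complex.ofReal)
  have hM : spectralRadius ℂ M < 1 := by
    rwa [spectralRadius, AlgEquiv.spectrum_eq]
  refine .of_nonneg_of_le (fun _ => norm_nonneg _) (fun k => ?_)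
    (summable_norm_pow_of_spectralRadius_lt_one M hM)
  rw [← map_pow, ← map_pow, show A.map Complex.ofReal ^ k = (A ^ k).map Complex.ofReal from
    (map_pow Complex.ofRealHom.mapMatrix A k).symm]
  exact (A ^ k).norm_toEuclideanCLM_le_norm_map_ofReal


theorem map_eq_of_ae_tendsto_of_forall_map_eq {α E : Type*} [MeasurableSpace α] {m : Measure α}
    [IsProbabilityMeasure m] [TopologicalSpace E] [MeasurableSpace E] [HasOuterApproxClosed E]
    [BorelSpace E] {Z : ℕ → α → E} {Y : α → E} {ν : Measure E} (hZ : ∀ n, AEMeasurable (Z n) m)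
    (hY : AEMeasurable Y m) (hZν : ∀ n, m.map (Z n) = ν)
    (hlim : ∀ᵐ a ∂m, Tendsto (fun n => Z n a) atTop (𝓝 (Y a))) :
    m.map Y = ν := by
  have : IsProbabilityMeasure ν := hZν 0 ▸ Measure.isProbabilityMeasure_map (hZ 0)
  have hconst : TendstoInDistribution Z atTop id (fun _ => m) ν :=
    tendstoInDistribution_of_identDistrib 0 (fun j => ⟨hZ 0, hZ j, by rw [hZν, hZν]⟩)
      ⟨hZ 0, aemeasurable_id, by rw [hZν, Measure.map_id]⟩
  simpa using tendstoInDistribution_unique Z (tendstoInDistribution_of_ae_tendsto hZ hY hlim) hconst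

theorem MeasureTheory.Measure.map_conv_map_eq_map_prod {α β M : Type*} [MeasurableSpace α]
    [MeasurableSpace β] [AddMonoid M] [MeasurableSpace M] [MeasurableAdd₂ M] {μ : Measure α}
    {ν : Measure β} [SFinite μ] [SFinite ν] {g : α → M} {h : β → M} (hg : Measurable g)
    (hh : Measurable h) :
    μ.map g ∗ ν.map h = (μ.prod ν).map fun p => g p.1 + h p.2 := by
  rw [Measure.conv, Measure.map_prod_map _ _ hg hh,
    Measure.map_map measurable_add (hg.prodMap hh)]
  rfl

theorem ProbabilityTheory.iIndepFun.map_sum_range_succ {Ω M : Type*} [MeasurableSpace Ω]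
    {P : Measure Ω} [IsFiniteMeasure P] [AddCommMonoid M] [MeasurableSpace M] [MeasurableAdd₂ M]
    {f : ℕ → Ω → M} (hf : iIndepFun f P) (hmeas : ∀ k, Measurable (f k)) (n : ℕ) :
    P.map (fun ω => ∑ k ∈ Finset.range (n + 1), f k ω)
      = P.map (f n) ∗ P.map (fun ω => ∑ k ∈ Finset.range n, f k ω) := by
  have hind := (hf.indepFun_finsetSum_of_notMem hmeas (Finset.notMem_range_self (n := n))).symm
  rw [Finset.sum_fn] at hind
  simp_rw [Finset.sum_range_succ, add_comm _ (f n _)]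
  rw [← Pi.add_def, hind.map_add_eq_map_conv_map (hmeas n)
    (Finset.measurable_sum _ fun k _ => hmeas k)]

theorem ae_summable_clm_apply_of_summable_norm {Ω E F : Type*} [MeasurableSpace Ω]
    {P : Measure Ω} [NormedAddCommGroup E] [NormedSpace ℝ E] [NormedAddCommGroup F]
    [NormedSpace ℝ F] [CompleteSpace F] {L : ℕ → E →L[ℝ] F} (hL : Summable fun k => ‖L k‖)
    {f : ℕ → Ω → E} (hf : ∀ k, AEStronglyMeasurable (f k) P) {M : ℝ≥0∞} (hM : M ≠ ∞)
    (hfM : ∀ k, eLpNorm (f k) 1 P ≤ M) :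
    ∀ᵐ ω ∂P, Summable fun k => L k (f k ω) := by
  have hLf : ∀ k, eLpNorm (fun ω => L k (f k ω)) 1 P ≤ ‖L k‖₊ * M := fun k =>
    (eLpNorm_le_mul_eLpNorm_of_ae_le_mul' (ae_of_all _ fun ω => (L k).le_opENorm (f k ω)) 1).trans
      (by gcongr; exact hfM k)
  have hsum : ∑' k, eLpNorm (fun ω => L k (f k ω)) 1 P ≠ ∞ := by
    refine ne_top_of_le_ne_top ?_ (ENNReal.tsum_le_tsum hLf)
    rw [ENNReal.tsum_mul_right]
    exact ENNReal.mul_ne_top (ENNReal.tsum_coe_ne_top_iff_summable.2 (NNReal.summable_coe.1 hL)) hM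
  filter_upwards [summable_norm_of_tsum_eLpNorm_ne_top le_rfl
    (fun k => (L k).continuous.comp_aestronglyMeasurable (hf k)) hsum] with ω hω
  exact hω.of_norm

theorem map_pow_conv_map_sum_eq_of_eq_map_conv {Ω E : Type*} [MeasurableSpace Ω]
    [AddCommMonoid E] [Module ℝ E] [TopologicalSpace E] [MeasurableSpace E] [BorelSpace E]
    [MeasurableAdd₂ E] (T : E →L[ℝ] E) {μ γ : Measure E} [SFinite μ] [SFinite γ]
    (hμ : μ = μ.map T ∗ γ) {P : Measure Ω} [IsProbabilityMeasure P] {Ck : ℕ → Ω → E}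
    (hCk : ∀ k, Measurable (Ck k)) (hindep : iIndepFun Ck P) (hident : ∀ k, P.map (Ck k) = γ) :
    ∀ n, μ.map ⇑(T ^ n) ∗ P.map (fun ω => ∑ k ∈ Finset.range n, (T ^ k) (Ck k ω)) = μ
  | 0 => by simp [Measure.map_id]
  | n + 1 => by
    have hsucc := (hindep.comp _ fun k => (T ^ k).continuous.measurable).map_sum_range_succ
      (fun k => (T ^ k).continuous.measurable.comp (hCk k)) n
    simp only [Function.comp_apply] at hsucc
    calc _ = (μ.map T ∗ γ).map ⇑(T ^ n)
            ∗ P.map (fun ω => ∑ k ∈ Finset.range n, (T ^ k) (Ck k ω)) := by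
          rw [hsucc, Measure.map_conv_continuousLinearMap,
            Measure.map_map (T ^ n).continuous.measurable T.continuous.measurable,
            ← Measure.map_map (T ^ n).continuous.measurable (hCk n), hident, Measure.conv_assoc,
            pow_succ]
          rfl
      _ = μ := by rw [← hμ, map_pow_conv_map_sum_eq_of_eq_map_conv T hμ hCk hindep hident n]

theorem map_eq_map_tsum_of_map_eq_map_add {Ω Ω' E : Type*} [MeasurableSpace Ω]
    [MeasurableSpace Ω'] [NormedAddCommGroup E] [NormedSpace ℝ E] [CompleteSpace E]
    [SecondCountableTopology E] [MeasurableSpace E] [BorelSpace E]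
    {P : Measure Ω} [IsProbabilityMeasure P] {P' : Measure Ω'} [IsProbabilityMeasure P']
    (T : E →L[ℝ] E) (hT : Summable fun k => ‖T ^ k‖) {C X : Ω → E} (hC : Measurable C)
    (hCint : Integrable C P) (hX : Measurable X) (hXC : IndepFun X C P)
    (hfix : P.map X = P.map fun ω => T (X ω) + C ω) {Ck : ℕ → Ω' → E}
    (hCk : ∀ k, Measurable (Ck k)) (hindep : iIndepFun Ck P')
    (hident : ∀ k, P'.map (Ck k) = P.map C) :
    P.map X = P'.map fun ω' => ∑' k, (T ^ k) (Ck k ω') := by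
  have : IsProbabilityMeasure (P.map X) := Measure.isProbabilityMeasure_map hX.aemeasurable
  have hμ : P.map X = (P.map X).map T ∗ P.map C := by
    rw [Measure.map_map T.measurable hX]
    conv_lhs => rw [hfix]
    exact (hXC.comp T.measurable measurable_id).map_add_eq_map_conv_map (T.measurable.comp hX) hC
  let S n ω' := ∑ k ∈ Finset.range n, (T ^ k) (Ck k ω')
  have hS : ∀ n, Measurable (S n) := fun n =>
    Finset.measurable_sum _ fun k _ => (T ^ k).measurable.comp (hCk k)
  have hiter : ∀ n, ((P.map X).prod P').map (fun p => (T ^ n) p.1 + S n p.2) = P.map X := by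
    intro n
    rw [← Measure.map_conv_map_eq_map_prod (T ^ n).measurable (hS n)]
    exact map_pow_conv_map_sum_eq_of_eq_map_conv T hμ hCk hindep hident n
  have hsum : ∀ᵐ ω' ∂P', Summable fun k => (T ^ k) (Ck k ω') :=
    ae_summable_clm_apply_of_summable_norm hT (fun k => (hCk k).aestronglyMeasurable)
      (memLp_one_iff_integrable.2 hCint).eLpNorm_ne_top fun k =>
        ((IdentDistrib.mk (hCk k).aemeasurable hC.aemeasurable (hident k)).eLpNorm_eq 1).le
  let Y ω' := ∑' k, (T ^ k) (Ck k ω')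
  have hY : AEMeasurable Y P' := by
    refine aemeasurable_of_tendsto_metrizable_ae' (fun n => (hS n).aemeasurable) ?_
    filter_upwards [hsum] with ω' h using h.hasSum.tendsto_sum_nat
  have hpow : ∀ x, Tendsto (fun n => (T ^ n) x) atTop (𝓝 0) := fun x =>
    squeeze_zero_norm (fun n => (T ^ n).le_opNorm x)
      (by simpa using hT.tendsto_atTop_zero.mul_const ‖x‖)
  have hlim : ∀ᵐ p ∂(P.map X).prod P',
      Tendsto (fun n => (T ^ n) p.1 + S n p.2) atTop (𝓝 (Y p.2)) := by
    filter_upwards [Measure.quasiMeasurePreserving_snd.ae hsum] with p hp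
    simpa only [zero_add] using (hpow p.1).add hp.hasSum.tendsto_sum_nat
  calc P.map X = ((P.map X).prod P').map (Y ∘ Prod.snd) :=
        (map_eq_of_ae_tendsto_of_forall_map_eq
          (fun n => ((T ^ n).measurable.comp measurable_fst).add
            ((hS n).comp measurable_snd) |>.aemeasurable)
          (hY.comp_quasiMeasurePreserving Measure.quasiMeasurePreserving_snd) hiter hlim).symm
    _ = P'.map Y := by
      rw [← AEMeasurable.map_map_of_aemeasurable (by simpa using hY)
        measurable_snd.aemeasurable, Measure.map_snd_prod, measure_univ, one_smul]

/-- Let `A ∈ ℝ^{d×d}` have spectral radius `r(A) < 1` (over `ℂ`), and let `C` be a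
`d`-dimensional random vector with `E‖C‖ < ∞`. If `X` is a random vector independent of `C`
whose law equals the law of `A X + C`, then the law of `X` equals the law of
`∑'_k A^k C_k`, where `(C_k)` are independent copies of `C` (on any probability space);
in particular any two solutions of the fixed point equation `X =_d A X + C` have the same
law. Here `A` acts through the continuous linear map it induces on Euclidean space. -/
theorem stmt5 {Ω : Type*} [MeasurableSpace Ω] (P : Measure Ω) [IsProbabilityMeasure P]
    (d : ℕ) (A : Matrix (Fin d) (Fin d) ℝ)
    (hr : spectralRadius ℂ (A.map Complex.ofReal) < 1)
    (C : Ω → EuclideanSpace ℝ (Fin d)) (hCmeas : Measurable C) (hCint : Integrable C P)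
    (X : Ω → EuclideanSpace ℝ (Fin d)) (hXmeas : Measurable X)
    (hXindep : IndepFun X C P)
    (hXfix : Measure.map X P
      = Measure.map (fun ω => (Matrix.toEuclideanCLM (𝕜 := ℝ) A) (X ω) + C ω) P)
    {Ω' : Type*} [MeasurableSpace Ω'] (P' : Measure Ω') [IsProbabilityMeasure P']
    (Ck : ℕ → Ω' → EuclideanSpace ℝ (Fin d))
    (hCkmeas : ∀ k, Measurable (Ck k))
    (hCkindep : iIndepFun Ck P')
    (hCkident : ∀ k, Measure.map (Ck k) P' = Measure.map C P) :
    Measure.map X P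
      = Measure.map
          (fun ω' => ∑' k : ℕ, ((Matrix.toEuclideanCLM (𝕜 := ℝ) A) ^ k) (Ck k ω')) P' ∧
    ∀ (Ω'' : Type*) (_ : MeasurableSpace Ω'') (P'' : Measure Ω''),
      IsProbabilityMeasure P'' →
      ∀ X'' C'' : Ω'' → EuclideanSpace ℝ (Fin d),
        Measurable X'' → Measurable C'' →
        Measure.map C'' P'' = Measure.map C P →
        IndepFun X'' C'' P'' →
        Measure.map X'' P''
          = Measure.map (fun ω => (Matrix.toEuclideanCLM (𝕜 := ℝ) A) (X'' ω) + C'' ω) P'' →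
        Measure.map X'' P'' = Measure.map X P := by
  have hT := Matrix.summable_norm_toEuclideanCLM_pow A hr
  have hX_law := map_eq_map_tsum_of_map_eq_map_add _ hT hCmeas hCint hXmeas hXindep hXfix
    hCkmeas hCkindep hCkident
  refine ⟨hX_law, fun Ω'' _ P'' _ X'' C'' hX'' hC'' hC''_law hX''C'' hfix'' => ?_⟩
  have hC''int : Integrable C'' P'' :=
    (IdentDistrib.mk hC''.aemeasurable hCmeas.aemeasurable hC''_law).integrable_iff.2 hCint
  rw [hX_law, map_eq_map_tsum_of_map_eq_map_add _ hT hC'' hC''int hX'' hX''C'' hfix'' hCkmeas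
    hCkindep fun k => (hCkident k).trans hC''_law.symm]
end

section
/- Let d ∈ ℕ, c = (c_1,…,c_d) ∈ [0,∞)^d, let ũ ∈ ℝ^d have all coordinates strictly positive, let μ_1,…,μ_d be Borel measures on U_d := [0,∞)^d∖{0} with ∫_{U_d}‖z‖² μ_ℓ(dz) < ∞ for each ℓ, let v ∈ ℂ^d, and let λ ∈ ℂ, s ∈ ℝ satisfy s > 0 and Re(λ) ≤ s/2. Define C_{v,ℓ} := 2|⟨v,e_ℓ⟩|²c_ℓ + ∫_{U_d}|⟨v,z⟩|² μ_ℓ(dz) and C̃_{v,ℓ} := 2⟨v,e_ℓ⟩²c_ℓ + ∫_{U_d}⟨v,z⟩² μ_ℓ(dz), and let Σ_v be the 2×2 real matrix given by Σ_v := (1/2)Σ_{ℓ=1}^d ũ_ℓ (C_{v,ℓ} I_2 + [[Re C̃_{v,ℓ}, Im C̃_{v,ℓ}],[Im C̃_{v,ℓ}, −Re C̃_{v,ℓ}]]·1_{Im(λ)=0}) if Re(λ) = s/2, and Σ_v := (1/2)Σ_{ℓ=1}^d ũ_ℓ (C_{v,ℓ}/(s−2Re(λ)) I_2 + [[Re(C̃_{v,ℓ}/(s−2λ)),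 Im(C̃_{v,ℓ}/(s−2λ))],[Im(C̃_{v,ℓ}/(s−2λ)), −Re(C̃_{v,ℓ}/(s−2λ))]]) if Re(λ) < s/2. Then Σ_v = 0 if and only if c_ℓ⟨v,e_ℓ⟩ = 0 and μ_ℓ({z ∈ U_d : ⟨v,z⟩ ≠ 0}) = 0 for every ℓ ∈ {1,…,d}. -/
open MeasureTheory
open scoped ENNReal

/-- The pairing `⟨v,z⟩ = ∑ j, v j * z j` of `v ∈ ℂ^d` with `z ∈ ℝ^d`. -/
noncomputable def pairCV {d : ℕ} (v : Fin d → ℂ) (z : Fin d → ℝ) : ℂ :=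
  ∑ j, v j * (z j : ℂ)

/-- `C_{v,ℓ} = 2|⟨v,e_ℓ⟩|² c_ℓ + ∫ |⟨v,z⟩|² dμ_ℓ`. -/
noncomputable def Cvl {d : ℕ} (c : Fin d → ℝ) (μ : Fin d → Measure (Fin d → ℝ))
    (v : Fin d → ℂ) (ℓ : Fin d) : ℝ :=
  2 * ‖v ℓ‖ ^ 2 * c ℓ + ∫ z, ‖pairCV v z‖ ^ 2 ∂(μ ℓ)

/-- `C̃_{v,ℓ} = 2⟨v,e_ℓ⟩² c_ℓ + ∫ ⟨v,z⟩² dμ_ℓ`. -/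
noncomputable def Ctvl {d : ℕ} (c : Fin d → ℝ) (μ : Fin d → Measure (Fin d → ℝ))
    (v : Fin d → ℂ) (ℓ : Fin d) : ℂ :=
  2 * (v ℓ) ^ 2 * (c ℓ : ℂ) + ∫ z, (pairCV v z) ^ 2 ∂(μ ℓ)

/-- The asymptotic covariance matrix `Σ_v`: for `Re λ = s/2` it is
`(1/2) ∑ ℓ ũ_ℓ (C_{v,ℓ} I₂ + [[Re C̃, Im C̃],[Im C̃, -Re C̃]] 1_{Im λ = 0})`, and for
`Re λ < s/2` (more generally, `Re λ ≠ s/2`) it is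
`(1/2) ∑ ℓ ũ_ℓ (C_{v,ℓ}/(s-2Reλ) I₂ + [[Re(C̃/(s-2λ)), Im(C̃/(s-2λ))],[Im(C̃/(s-2λ)), -Re(C̃/(s-2λ))]])`. -/
noncomputable def SigmaV {d : ℕ} (c : Fin d → ℝ) (utld : Fin d → ℝ)
    (μ : Fin d → Measure (Fin d → ℝ)) (v : Fin d → ℂ) (lam : ℂ) (s : ℝ) :
    Matrix (Fin 2) (Fin 2) ℝ :=
  if lam.re = s / 2 then
    (1 / 2 : ℝ) • ∑ ℓ, utld ℓ •
      (Cvl c μ v ℓ • (1 : Matrix (Fin 2) (Fin 2) ℝ) +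
        (if lam.im = 0 then
          !![(Ctvl c μ v ℓ).re, (Ctvl c μ v ℓ).im;
             (Ctvl c μ v ℓ).im, -(Ctvl c μ v ℓ).re]
         else 0))
  else
    (1 / 2 : ℝ) • ∑ ℓ, utld ℓ •
      ((Cvl c μ v ℓ / (s - 2 * lam.re)) • (1 : Matrix (Fin 2) (Fin 2) ℝ) +
        !![(Ctvl c μ v ℓ / ((s : ℂ) - 2 * lam)).re, (Ctvl c μ v ℓ / ((s : ℂ) - 2 * lam)).im;
           (Ctvl c μ v ℓ / ((s : ℂ) - 2 * lam)).im, -(Ctvl c μ v ℓ / ((s : ℂ) - 2 * lam)).re])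

/-!
The trace of each summand `ũ_ℓ (a_ℓ I₂ + B_ℓ)` of `Σ_v` is `2 ũ_ℓ a_ℓ`, because `B_ℓ` (built from
`C̃_{v,ℓ}`) is traceless, while `a_ℓ ≥ 0` is a positive multiple of `C_{v,ℓ}`. So `Σ_v = 0` forces
every `C_{v,ℓ}` to vanish. Conversely `C_{v,ℓ}` is a sum of two nonnegative terms, which vanish
exactly when `c_ℓ v_ℓ = 0` and `⟨v,·⟩ = 0` holds `μ_ℓ`-a.e. (the second moment makes the integral
a genuine one, not a junk `0`); then `C̃_{v,ℓ} = 0` as well, and `Σ_v = 0`. As `μ_ℓ` lives on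
`U_d`, the a.e. condition is the measure condition of the statement.
-/

lemma integrable_norm_sq_of_lintegral_lt_top {E : Type*} [NormedAddCommGroup E]
    [MeasurableSpace E] [OpensMeasurableSpace E] {μ : Measure E}
    (hμ : ∫⁻ z, (‖z‖₊ : ℝ≥0∞) ^ 2 ∂μ < ⊤) : Integrable (fun z => ‖z‖ ^ 2) μ := by
  refine ⟨(measurable_norm.pow_const 2).aestronglyMeasurable, ?_⟩
  simpa [HasFiniteIntegral, enorm_pow, enorm_eq_nnnorm] using hμ

lemma measure_and_eq_zero_iff {α : Type*} [MeasurableSpace α] {μ : Measure α} {p q : α → Prop}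
    (hp : μ {x | ¬ p x} = 0) : μ {x | p x ∧ q x} = 0 ↔ μ {x | q x} = 0 :=
  ⟨fun h => measure_mono_null (fun x hq => (em (p x)).elim (fun hpx => Or.inl ⟨hpx, hq⟩) Or.inr)
      (measure_union_null h hp),
    fun h => measure_mono_null (fun _ hx => hx.2) h⟩

lemma Matrix.sum_smul_one_add_eq_zero_iff {ι n : Type*} [Fintype ι] [Fintype n] [Nonempty n]
    [DecidableEq n] {u a : ι → ℝ} {B : ι → Matrix n n ℝ} (hu : ∀ i, 0 < u i)
    (ha : ∀ i, 0 ≤ a i) (hB : ∀ i, (B i).trace = 0) (hB₀ : ∀ i, a i = 0 → B i = 0) :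
    ∑ i, u i • (a i • (1 : Matrix n n ℝ) + B i) = 0 ↔ ∀ i, a i = 0 := by
  refine ⟨fun h i => ?_, fun h => Finset.sum_eq_zero fun i _ => by simp [h i, hB₀ i (h i)]⟩
  have htrace : ∑ i, u i * a i * Fintype.card n = 0 := by
    simpa [Matrix.trace_sum, Matrix.trace_add, hB, mul_assoc] using congrArg Matrix.trace h
  have hi := (Finset.sum_eq_zero_iff_of_nonneg fun i _ =>
    mul_nonneg (mul_nonneg (hu i).le (ha i)) (Nat.cast_nonneg _)).mp htrace i (Finset.mem_univ i)
  simpa [(hu i).ne', Fintype.card_ne_zero] using hi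

lemma Matrix.of_fin_two_zero {R : Type*} [Zero R] : !![(0 : R), 0; 0, 0] = 0 := by
  ext i j; fin_cases i <;> fin_cases j <;> rfl

section

variable {d : ℕ}

lemma norm_pairCV_le (v : Fin d → ℂ) (z : Fin d → ℝ) :
    ‖pairCV v z‖ ≤ (∑ j, ‖v j‖) * ‖z‖ :=
  calc ‖pairCV v z‖ ≤ ∑ j, ‖v j * (z j : ℂ)‖ := norm_sum_le _ _
    _ ≤ ∑ j, ‖v j‖ * ‖z‖ := Finset.sum_le_sum fun j _ => by
        rw [norm_mul, Complex.norm_real]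
        exact mul_le_mul_of_nonneg_left (norm_le_pi_norm z j) (norm_nonneg _)
    _ = (∑ j, ‖v j‖) * ‖z‖ := (Finset.sum_mul ..).symm

@[fun_prop]
lemma measurable_pairCV (v : Fin d → ℂ) : Measurable (pairCV v) := by
  unfold pairCV; fun_prop

lemma integrable_norm_pairCV_sq {μ : Measure (Fin d → ℝ)} (v : Fin d → ℂ)
    (hμ : ∫⁻ z, (‖z‖₊ : ℝ≥0∞) ^ 2 ∂μ < ⊤) : Integrable (fun z => ‖pairCV v z‖ ^ 2) μ := by
  refine ((integrable_norm_sq_of_lintegral_lt_top hμ).const_mul ((∑ j, ‖v j‖) ^ 2)).mono'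
    (by fun_prop) (ae_of_all _ fun z => ?_)
  rw [Real.norm_of_nonneg (by positivity), ← mul_pow]
  exact pow_le_pow_left₀ (norm_nonneg _) (norm_pairCV_le v z) 2

variable {c : Fin d → ℝ} {μ : Fin d → Measure (Fin d → ℝ)} {v : Fin d → ℂ} {ℓ : Fin d}

lemma Cvl_nonneg (hc : 0 ≤ c ℓ) : 0 ≤ Cvl c μ v ℓ :=
  add_nonneg (by positivity) (integral_nonneg fun _ => by positivity)

lemma Cvl_eq_zero_iff (hc : 0 ≤ c ℓ) (hint : Integrable (fun z => ‖pairCV v z‖ ^ 2) (μ ℓ)) :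
    Cvl c μ v ℓ = 0 ↔ (c ℓ : ℂ) * v ℓ = 0 ∧ ∀ᵐ z ∂(μ ℓ), pairCV v z = 0 := by
  rw [Cvl, add_eq_zero_iff_of_nonneg (by positivity) (integral_nonneg fun _ => by positivity),
    integral_eq_zero_iff_of_nonneg (fun _ => by positivity) hint]
  simp [or_comm, Filter.EventuallyEq]

lemma Ctvl_eq_zero_of_Cvl_eq_zero (hc : 0 ≤ c ℓ)
    (hint : Integrable (fun z => ‖pairCV v z‖ ^ 2) (μ ℓ)) (h : Cvl c μ v ℓ = 0) :
    Ctvl c μ v ℓ = 0 := by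
  obtain ⟨hcv, hμ⟩ := (Cvl_eq_zero_iff hc hint).mp h
  have hsq : ∫ z, pairCV v z ^ 2 ∂(μ ℓ) = 0 :=
    integral_eq_zero_of_ae (hμ.mono fun z hz => by simp [hz])
  rcases mul_eq_zero.mp hcv with h0 | h0 <;> simp [Ctvl, h0, hsq]

variable {utld : Fin d → ℝ} {lam : ℂ} {s : ℝ}

lemma SigmaV_eq_zero_iff_forall_Cvl_eq_zero (hc : ∀ i, 0 ≤ c i) (hu : ∀ i, 0 < utld i)
    (hmom : ∀ ℓ, ∫⁻ z, (‖z‖₊ : ℝ≥0∞) ^ 2 ∂(μ ℓ) < ⊤) (hlam : lam.re ≤ s / 2) :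
    SigmaV c utld μ v lam s = 0 ↔ ∀ ℓ, Cvl c μ v ℓ = 0 := by
  have hCt (ℓ) : Cvl c μ v ℓ = 0 → Ctvl c μ v ℓ = 0 :=
    Ctvl_eq_zero_of_Cvl_eq_zero (hc ℓ) (integrable_norm_pairCV_sq v (hmom ℓ))
  by_cases hre : lam.re = s / 2
  · rw [SigmaV, if_pos hre, smul_eq_zero_iff_right (by norm_num),
      Matrix.sum_smul_one_add_eq_zero_iff hu (fun ℓ => Cvl_nonneg (hc ℓ))
        (fun ℓ => by split_ifs <;> simp) (fun ℓ h => by simp [hCt ℓ h, Matrix.of_fin_two_zero])]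
  · have hgap : 0 < s - 2 * lam.re := by linarith [lt_of_le_of_ne hlam hre]
    have hCt' (ℓ) (h : Cvl c μ v ℓ / (s - 2 * lam.re) = 0) : Ctvl c μ v ℓ = 0 :=
      hCt ℓ ((div_eq_zero_iff.mp h).resolve_right hgap.ne')
    rw [SigmaV, if_neg hre, smul_eq_zero_iff_right (by norm_num),
      Matrix.sum_smul_one_add_eq_zero_iff hu (fun ℓ => div_nonneg (Cvl_nonneg (hc ℓ)) hgap.le)
        (fun ℓ => by simp) (fun ℓ h => by simp [hCt' ℓ h, Matrix.of_fin_two_zero])]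
    simp [hgap.ne']

end

theorem stmt6_general (d : ℕ) (c : Fin d → ℝ) (hc : ∀ i, 0 ≤ c i)
    (utld : Fin d → ℝ) (hu : ∀ i, 0 < utld i)
    (μ : Fin d → Measure (Fin d → ℝ))
    (hsupp : ∀ ℓ, μ ℓ {z | ¬ ((∀ i, 0 ≤ z i) ∧ z ≠ 0)} = 0)
    (hmom : ∀ ℓ, ∫⁻ z, (‖z‖₊ : ℝ≥0∞) ^ 2 ∂(μ ℓ) < ⊤)
    (v : Fin d → ℂ) (lam : ℂ) (s : ℝ) (hlam : lam.re ≤ s / 2) :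
    SigmaV c utld μ v lam s = 0 ↔
      ∀ ℓ, (c ℓ : ℂ) * v ℓ = 0 ∧
        μ ℓ {z | ((∀ i, 0 ≤ z i) ∧ z ≠ 0) ∧ pairCV v z ≠ 0} = 0 := by
  rw [SigmaV_eq_zero_iff_forall_Cvl_eq_zero hc hu hmom hlam]
  simp only [Cvl_eq_zero_iff (hc _) (integrable_norm_pairCV_sq v (hmom _)),
    measure_and_eq_zero_iff (hsupp _), ae_iff]

/-- Let `c ∈ [0,∞)^d`, `ũ ∈ (0,∞)^d`, let `μ_1, …, μ_d` be Borel measures on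
`U_d = [0,∞)^d \ {0}` with finite second moments, `v ∈ ℂ^d`, and `λ ∈ ℂ`, `s > 0` with
`Re λ ≤ s/2`. Then `Σ_v = 0` if and only if for every `ℓ`, `c_ℓ ⟨v,e_ℓ⟩ = 0` and
`μ_ℓ {z ∈ U_d : ⟨v,z⟩ ≠ 0} = 0`. -/
theorem stmt6 (d : ℕ) (c : Fin d → ℝ) (hc : ∀ i, 0 ≤ c i)
    (utld : Fin d → ℝ) (hu : ∀ i, 0 < utld i)
    (μ : Fin d → Measure (Fin d → ℝ))
    (hsupp : ∀ ℓ, μ ℓ {z | ¬ ((∀ i, 0 ≤ z i) ∧ z ≠ 0)} = 0)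
    (hmom : ∀ ℓ, ∫⁻ z, (‖z‖₊ : ℝ≥0∞) ^ 2 ∂(μ ℓ) < ⊤)
    (v : Fin d → ℂ) (lam : ℂ) (s : ℝ) (hs : 0 < s) (hlam : lam.re ≤ s / 2) :
    SigmaV c utld μ v lam s = 0 ↔
      ∀ ℓ, (c ℓ : ℂ) * v ℓ = 0 ∧
        μ ℓ {z | ((∀ i, 0 ≤ z i) ∧ z ≠ 0) ∧ pairCV v z ≠ 0} = 0 :=
  stmt6_general d c hc utld hu μ hsupp hmom v lam s hlam
end

section
/- Let λ ∈ ℂ with Im(λ) ≠ 0, let s ∈ ℝ with 2Re(λ) < s, and let b ∈ ℂ with b ≠ 0. For w ≥ 0 set g(w) := (Re(e^{−(s−2λ)w/2} b), Im(e^{−(s−2λ)w/2} b))^⊤ ∈ ℝ². Then the 2×2 real matrix ∫_0^∞ g(w) g(w)^⊤ dw is strictly positive definite; equivalently, for every (a,β)^⊤ ∈ ℝ²∖{0} one has ∫_0^∞ (Re((a − iβ) e^{−(s−2λ)w/2} b))² dw > 0. -/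
/-!
With `μ = s/2 - λ` the integrands are built from `z(w) = e^{-μw} c`, which decays like
`e^{-Re μ · w}` since `Re μ > 0`, so all integrals converge. The quadratic form of the matrix at
`(a, β)` is `∫ (a Re z + β Im z)² = ∫ (Re((a - iβ) z))²`, so positive definiteness reduces to the
second claim. That integral of a continuous nonnegative function is positive as soon as
`Re((a - iβ) b e^{-μw}) ≠ 0` for one `w > 0`, and since `Im μ ≠ 0` the factor `e^{-μw}` turns
through a quarter period, carrying the imaginary part into the real one.
-/

open MeasureTheory Set Matrix

namespace Complex

lemma re_ofReal_sub_ofReal_mul_I_mul (a β : ℝ) (z : ℂ) :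
    (((a : ℂ) - β * I) * z).re = a * z.re + β * z.im := by
  simp [mul_re]

lemma ofReal_sub_ofReal_mul_I_ne_zero {a β : ℝ} (h : ¬ (a = 0 ∧ β = 0)) :
    (a : ℂ) - β * I ≠ 0 := by
  contrapose! h
  simpa using Complex.ext_iff.mp h

lemma norm_exp_neg_mul_ofReal (μ : ℂ) (w : ℝ) : ‖exp (-(μ * w))‖ = Real.exp (-(μ.re * w)) := by
  simp [norm_exp]

variable {μ : ℂ}

lemma exp_neg_mul_ofReal_of_im_mul_eq {T : ℝ} (hT : μ.im * T = Real.pi / 2) :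
    exp (-(μ * T)) = -(Real.exp (-(μ.re * T)) * I) := by
  apply Complex.ext <;> simp [exp_re, exp_im, hT]

lemma exists_pos_re_exp_neg_mul_mul_ne_zero (hμ : μ.im ≠ 0) {c : ℂ} (hc : c ≠ 0) :
    ∃ w : ℝ, 0 < w ∧ (exp (-(μ * w)) * c).re ≠ 0 := by
  by_contra! h
  set T := Real.pi / (2 * μ.im)
  have hT : μ.im * T = Real.pi / 2 := by simp only [T]; field_simp
  set w := |T| + 1
  have hre := h w (by positivity)
  have hshift := h (w + T) (by linarith [neg_abs_le T])
  rw [ofReal_add, mul_add, neg_add, exp_add, exp_neg_mul_ofReal_of_im_mul_eq hT] at hshift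
  -- a quarter period later the real part has become a positive multiple of the imaginary part
  have him : (exp (-(μ * w)) * c).im = 0 := by
    have hquarter : (exp (-(μ * w)) * -(Real.exp (-(μ.re * T)) * I) * c).re
        = Real.exp (-(μ.re * T)) * (exp (-(μ * w)) * c).im := by
      simp only [mul_re, mul_im, neg_re, neg_im, ofReal_re, ofReal_im, I_re, I_im]
      ring
    rw [hquarter] at hshift
    exact (mul_eq_zero.mp hshift).resolve_left (Real.exp_pos _).ne'
  exact mul_ne_zero (exp_ne_zero _) hc (Complex.ext hre him)

lemma integrableOn_Ioi_mul_of_abs_le_norm_exp_neg_mul (hμ : 0 < μ.re) (c : ℂ) {f g : ℝ → ℝ}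
    (hf : Continuous f) (hg : Continuous g) (hfc : ∀ w, |f w| ≤ ‖exp (-(μ * w)) * c‖)
    (hgc : ∀ w, |g w| ≤ ‖exp (-(μ * w)) * c‖) :
    IntegrableOn (fun w ↦ f w * g w) (Ioi 0) := by
  refine ((exp_neg_integrableOn_Ioi 0 (by linarith : 0 < 2 * μ.re)).const_mul (‖c‖ ^ 2)).mono'
    (hf.mul hg).aestronglyMeasurable (ae_of_all _ fun w ↦ ?_)
  calc ‖f w * g w‖ = |f w| * |g w| := by rw [Real.norm_eq_abs, abs_mul]
    _ ≤ ‖exp (-(μ * w)) * c‖ * ‖exp (-(μ * w)) * c‖ :=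
        mul_le_mul (hfc w) (hgc w) (abs_nonneg _) (norm_nonneg _)
    _ = ‖c‖ ^ 2 * Real.exp (-(2 * μ.re) * w) := by
        rw [norm_mul, norm_exp_neg_mul_ofReal, ← sq, mul_pow, ← Real.exp_nat_mul]
        ring_nf

lemma integral_sq_re_exp_neg_mul_mul_pos (hre : 0 < μ.re) (him : μ.im ≠ 0) {c : ℂ} (hc : c ≠ 0) :
    0 < ∫ w in Ioi (0 : ℝ), (exp (-(μ * w)) * c).re ^ 2 := by
  have hcont : Continuous fun w : ℝ ↦ (exp (-(μ * w)) * c).re := by fun_prop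
  have hint : IntegrableOn (fun w : ℝ ↦ (exp (-(μ * w)) * c).re ^ 2) (Ioi 0) := by
    simpa only [sq] using integrableOn_Ioi_mul_of_abs_le_norm_exp_neg_mul hre c hcont hcont
      (fun w ↦ abs_re_le_norm _) (fun w ↦ abs_re_le_norm _)
  rw [setIntegral_pos_iff_support_of_nonneg_ae (ae_of_all _ fun w ↦ sq_nonneg _) hint]
  obtain ⟨w₀, hw₀, hne⟩ := exists_pos_re_exp_neg_mul_mul_ne_zero him hc
  have hopen : IsOpen (Function.support fun w : ℝ ↦ (exp (-(μ * w)) * c).re ^ 2) :=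
    (hcont.pow 2).isOpen_support
  exact (hopen.inter isOpen_Ioi).measure_pos volume ⟨w₀, pow_ne_zero 2 hne, hw₀⟩

end Complex

lemma Matrix.posDef_fin_two_of_quadForm_pos {A B C : ℝ}
    (h : ∀ a β : ℝ, ¬ (a = 0 ∧ β = 0) → 0 < a ^ 2 * A + 2 * a * β * B + β ^ 2 * C) :
    !![A, B; B, C].PosDef := by
  refine Matrix.posDef_iff_dotProduct_mulVec.mpr ⟨?_, fun x hx ↦ ?_⟩
  · ext i j
    fin_cases i <;> fin_cases j <;> rfl
  · have hx' : ¬ (x 0 = 0 ∧ x 1 = 0) := fun h0 ↦ hx (by ext i; fin_cases i <;> simp [h0])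
    have hform : star x ⬝ᵥ (!![A, B; B, C] *ᵥ x)
        = x 0 ^ 2 * A + 2 * x 0 * x 1 * B + x 1 ^ 2 * C := by
      simp [dotProduct, Fin.sum_univ_two]
      ring
    exact hform ▸ h (x 0) (x 1) hx'

lemma posDef_integral_gram {α : Type*} [MeasurableSpace α] {ν : Measure α} {f g : α → ℝ}
    (hff : Integrable (fun x ↦ f x ^ 2) ν) (hfg : Integrable (fun x ↦ f x * g x) ν)
    (hgg : Integrable (fun x ↦ g x ^ 2) ν)
    (h : ∀ a β : ℝ, ¬ (a = 0 ∧ β = 0) → 0 < ∫ x, (a * f x + β * g x) ^ 2 ∂ν) :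
    !![∫ x, f x ^ 2 ∂ν, ∫ x, f x * g x ∂ν; ∫ x, f x * g x ∂ν, ∫ x, g x ^ 2 ∂ν].PosDef := by
  refine Matrix.posDef_fin_two_of_quadForm_pos fun a β hab ↦ ?_
  have hexpand : ∫ x, (a * f x + β * g x) ^ 2 ∂ν
      = a ^ 2 * ∫ x, f x ^ 2 ∂ν + 2 * a * β * ∫ x, f x * g x ∂ν + β ^ 2 * ∫ x, g x ^ 2 ∂ν := by
    have hsq : ∀ x, (a * f x + β * g x) ^ 2
        = a ^ 2 * f x ^ 2 + 2 * a * β * (f x * g x) + β ^ 2 * g x ^ 2 := fun x ↦ by ring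
    simp only [hsq]
    rw [integral_add ?_ (hgg.const_mul _), integral_add (hff.const_mul _) (hfg.const_mul _),
      integral_const_mul, integral_const_mul, integral_const_mul]
    exact (hff.const_mul _).add (hfg.const_mul _)
  exact hexpand ▸ h a β hab

open Complex in
/-- For `λ ∈ ℂ` with `Im λ ≠ 0`, `s ∈ ℝ` with `2 Re λ < s`, and `b ∈ ℂ`, `b ≠ 0`, with
`g(w) = (Re(e^{-(s-2λ)w/2} b), Im(e^{-(s-2λ)w/2} b))ᵀ`, the matrix `∫_0^∞ g(w) g(w)ᵀ dw`
is strictly positive definite; equivalently, for every `(a,β) ≠ 0`,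
`∫_0^∞ (Re((a - iβ) e^{-(s-2λ)w/2} b))² dw > 0`. -/
theorem stmt8 (lam : ℂ) (him : lam.im ≠ 0) (s : ℝ) (hs : 2 * lam.re < s)
    (b : ℂ) (hb : b ≠ 0) :
    Matrix.PosDef
      !![∫ w in Set.Ioi (0:ℝ), ((Complex.exp (-(((s : ℂ) - 2 * lam) * w / 2)) * b).re) ^ 2,
         ∫ w in Set.Ioi (0:ℝ), (Complex.exp (-(((s : ℂ) - 2 * lam) * w / 2)) * b).re *
           (Complex.exp (-(((s : ℂ) - 2 * lam) * w / 2)) * b).im;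
         ∫ w in Set.Ioi (0:ℝ), (Complex.exp (-(((s : ℂ) - 2 * lam) * w / 2)) * b).re *
           (Complex.exp (-(((s : ℂ) - 2 * lam) * w / 2)) * b).im,
         ∫ w in Set.Ioi (0:ℝ), ((Complex.exp (-(((s : ℂ) - 2 * lam) * w / 2)) * b).im) ^ 2] ∧
    ∀ a β : ℝ, ¬ (a = 0 ∧ β = 0) →
      0 < ∫ w in Set.Ioi (0:ℝ),
        ((((a : ℂ) - (β : ℂ) * Complex.I) *
          Complex.exp (-(((s : ℂ) - 2 * lam) * w / 2)) * b).re) ^ 2 := by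
  set μ : ℂ := s / 2 - lam
  have hμre : 0 < μ.re := by simp [μ]; linarith
  have hμim : μ.im ≠ 0 := by simpa [μ] using him
  have hexp : ∀ w : ℝ, -(((s : ℂ) - 2 * lam) * w / 2) = -(μ * w) := fun w ↦ by ring
  simp only [hexp]
  have hpos : ∀ a β : ℝ, ¬ (a = 0 ∧ β = 0) →
      0 < ∫ w in Ioi (0 : ℝ), ((((a : ℂ) - β * I) * exp (-(μ * w)) * b).re) ^ 2 := by
    intro a β hab
    have hcomm : ∀ w : ℝ, ((a : ℂ) - β * I) * exp (-(μ * w)) * b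
        = exp (-(μ * w)) * (((a : ℂ) - β * I) * b) := fun w ↦ by ring
    simp only [hcomm]
    exact integral_sq_re_exp_neg_mul_mul_pos hμre hμim
      (mul_ne_zero (ofReal_sub_ofReal_mul_I_ne_zero hab) hb)
  have hcont : Continuous fun w : ℝ ↦ exp (-(μ * w)) * b := by fun_prop
  have hint {f g : ℂ → ℝ} (hf : Continuous f) (hg : Continuous g) (hfn : ∀ z, |f z| ≤ ‖z‖)
      (hgn : ∀ z, |g z| ≤ ‖z‖) :
      IntegrableOn (fun w : ℝ ↦ f (exp (-(μ * w)) * b) * g (exp (-(μ * w)) * b)) (Ioi 0) :=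
    integrableOn_Ioi_mul_of_abs_le_norm_exp_neg_mul hμre b (hf.comp hcont) (hg.comp hcont)
      (fun w ↦ hfn _) (fun w ↦ hgn _)
  refine ⟨posDef_integral_gram ?_ (hint continuous_re continuous_im abs_re_le_norm abs_im_le_norm)
    ?_ fun a β hab ↦ ?_, hpos⟩
  · simpa only [sq, IntegrableOn] using
      hint continuous_re continuous_re abs_re_le_norm abs_re_le_norm
  · simpa only [sq, IntegrableOn] using
      hint continuous_im continuous_im abs_im_le_norm abs_im_le_norm
  · simpa only [mul_assoc, re_ofReal_sub_ofReal_mul_I_mul] using hpos a β hab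
end

section
/- Let d ∈ ℕ, B ∈ ℝ^{d×d}, s ∈ ℝ, Π ∈ ℝ^{d×d}, and suppose there exist constants C₁, C₂ ∈ (0,∞) such that ‖e^{−su}e^{uB} − Π‖ ≤ C₁e^{−C₂u} for all u ≥ 0, where e^{uB} is the matrix exponential. Let λ ∈ ℂ with Re(λ) = s/2 and Im(λ) ≠ 0. Then, viewing matrices as complex matrices, t^{−1}e^{−st}∫_0^t e^{2λ(t−u)} e^{uB} du → 0 as t → ∞ (entrywise convergence in ℂ^{d×d}). -/
/-! Since `Re λ = s/2`, `e^{-st} e^{2λ(t-u)} = e^{iθ(t-u)} e^{-su}` with `θ = 2 Im λ`, so the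
quantity to control is `∫₀ᵗ e^{iθ(t-u)} f(u) du` for `f(u) = e^{-su} (e^{uB})ᵢⱼ`. Writing
`f = (f - Πᵢⱼ) + Πᵢⱼ`, the first part is bounded by `∫₀^∞ C₁ e^{-C₂u} du = C₁/C₂`, and the second
is an oscillatory integral, bounded by `2|Πᵢⱼ|/|θ|` since `θ ≠ 0`. The integral therefore stays
bounded, and dividing by `t` sends it to zero. -/

open MeasureTheory Filter

theorem Matrix.norm_apply_le_norm_toEuclideanCLM {n 𝕜 : Type*} [Fintype n] [DecidableEq n]
    [RCLike 𝕜] (A : Matrix n n 𝕜) (i j : n) :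
    ‖A i j‖ ≤ ‖Matrix.toEuclideanCLM (n := n) (𝕜 := 𝕜) A‖ := by
  set T := Matrix.toEuclideanCLM (n := n) (𝕜 := 𝕜) A
  have hcol : T (EuclideanSpace.single j 1) i = A i j := by
    simp [T, Matrix.ofLp_toEuclideanCLM, Matrix.mulVec_single]
  calc ‖A i j‖ = ‖T (EuclideanSpace.single j 1) i‖ := by rw [hcol]
    _ ≤ ‖T (EuclideanSpace.single j 1)‖ := PiLp.norm_apply_le _ i
    _ ≤ ‖T‖ := by simpa using T.le_opNorm (EuclideanSpace.single j (1 : 𝕜))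

-- Any Banach-algebra norm on matrices induces the product topology; we borrow the L2 operator norm.
open scoped Matrix.Norms.L2Operator in
theorem Matrix.continuous_exp_smul {n 𝕜 : Type*} [Fintype n] [DecidableEq n] [RCLike 𝕜]
    (B : Matrix n n 𝕜) : Continuous fun u : 𝕜 => NormedSpace.exp (u • B) := by
  let _ : NormedAlgebra ℚ (Matrix n n 𝕜) := NormedAlgebra.restrictScalars ℚ 𝕜 _
  exact NormedSpace.exp_continuous.comp (continuous_id.smul continuous_const)

theorem intervalIntegral.norm_integral_le_div_of_norm_le_mul_exp_neg {E : Type*}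
    [NormedAddCommGroup E] [NormedSpace ℝ E] {f : ℝ → E} {C c t : ℝ} (hc : 0 < c) (ht : 0 ≤ t)
    (hf : ∀ u, 0 ≤ u → ‖f u‖ ≤ C * Real.exp (-(c * u))) :
    ‖∫ u in (0 : ℝ)..t, f u‖ ≤ C / c := by
  have hC : 0 ≤ C := by simpa using (norm_nonneg _).trans (hf 0 le_rfl)
  have hprim : ∀ u ∈ Set.uIcc (0 : ℝ) t,
      HasDerivAt (fun u => -(C / c * Real.exp (-(c * u)))) (C * Real.exp (-(c * u))) u := by
    intro u _
    have h := (((hasDerivAt_id u).const_mul (-c)).exp).const_mul (-(C / c))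
    simp only [id, neg_mul, mul_one] at h
    exact h.congr_deriv (by field_simp)
  calc ‖∫ u in (0 : ℝ)..t, f u‖ ≤ ∫ u in (0 : ℝ)..t, C * Real.exp (-(c * u)) :=
        intervalIntegral.norm_integral_le_of_norm_le ht
          (ae_of_all _ fun u hu => hf u hu.1.le) (Continuous.intervalIntegrable (by fun_prop) _ _)
    _ = C / c * (1 - Real.exp (-(c * t))) := by
        rw [intervalIntegral.integral_eq_sub_of_hasDerivAt hprim
          (Continuous.intervalIntegrable (by fun_prop) _ _)]
        simp only [mul_zero, neg_zero, Real.exp_zero]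
        ring
    _ ≤ C / c := by
        have := Real.exp_pos (-(c * t))
        nlinarith [div_nonneg hC hc.le]

section

open Complex

theorem norm_integral_exp_ofReal_mul_I_le {θ : ℝ} (hθ : θ ≠ 0) (a b : ℝ) :
    ‖∫ x in a..b, exp (θ * x * I)‖ ≤ 2 / |θ| := by
  have hθI : (θ : ℂ) * I ≠ 0 := mul_ne_zero (ofReal_ne_zero.mpr hθ) I_ne_zero
  have hunit : ∀ x : ℝ, ‖exp (θ * I * x)‖ = 1 := fun x => by
    rw [mul_right_comm, ← ofReal_mul, norm_exp_ofReal_mul_I]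
  simp_rw [mul_right_comm _ _ I]
  rw [integral_exp_mul_complex hθI, norm_div, norm_mul, norm_I, mul_one, norm_real,
    Real.norm_eq_abs]
  gcongr
  calc ‖exp (θ * I * b) - exp (θ * I * a)‖ ≤ ‖exp (θ * I * b)‖ + ‖exp (θ * I * a)‖ :=
        norm_sub_le _ _
    _ = 2 := by rw [hunit, hunit]; norm_num

theorem norm_integral_exp_mul_I_mul_le {f : ℝ → ℂ} (hf : Continuous f) {p : ℂ} {C c θ t : ℝ}
    (hc : 0 < c) (hθ : θ ≠ 0) (ht : 0 ≤ t)
    (hdecay : ∀ u, 0 ≤ u → ‖f u - p‖ ≤ C * Real.exp (-(c * u))) :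
    ‖∫ u in (0 : ℝ)..t, exp (θ * (t - u) * I) * f u‖ ≤ C / c + ‖p‖ * (2 / |θ|) := by
  have hunit : ∀ u : ℝ, ‖exp (θ * (t - u) * I)‖ = 1 := fun u => by
    rw [← ofReal_sub, ← ofReal_mul, norm_exp_ofReal_mul_I]
  have hsplit : (∫ u in (0 : ℝ)..t, exp (θ * (t - u) * I) * f u) =
      (∫ u in (0 : ℝ)..t, exp (θ * (t - u) * I) * (f u - p)) +
        p * ∫ u in (0 : ℝ)..t, exp (θ * (t - u) * I) := by
    simp_rw [show ∀ u : ℝ, exp (θ * (t - u) * I) * f u =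
        exp (θ * (t - u) * I) * (f u - p) + p * exp (θ * (t - u) * I) from fun u => by ring]
    have hrest : Continuous fun u : ℝ => exp (θ * (t - u) * I) * (f u - p) := by fun_prop
    have hconst : Continuous fun u : ℝ => p * exp (θ * (t - u) * I) := by fun_prop
    rw [intervalIntegral.integral_add (hrest.intervalIntegrable _ _)
      (hconst.intervalIntegrable _ _), intervalIntegral.integral_const_mul]
  have hosc : ‖∫ u in (0 : ℝ)..t, exp (θ * (t - u) * I)‖ ≤ 2 / |θ| := by
    have hshift := intervalIntegral.integral_comp_sub_left (fun x : ℝ => exp (θ * x * I))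
      (a := 0) (b := t) t
    simp only [sub_self, sub_zero, ofReal_sub] at hshift
    rw [hshift]
    exact norm_integral_exp_ofReal_mul_I_le hθ 0 t
  rw [hsplit]
  refine (norm_add_le _ _).trans (add_le_add ?_ ?_)
  · refine intervalIntegral.norm_integral_le_div_of_norm_le_mul_exp_neg hc ht fun u hu => ?_
    rw [norm_mul, hunit, one_mul]
    exact hdecay u hu
  · rw [norm_mul]
    exact mul_le_mul_of_nonneg_left hosc (norm_nonneg p)

theorem exp_neg_mul_integral_exp_two_mul {lam : ℂ} {s : ℝ} (hre : lam.re = s / 2) (a : ℝ → ℂ)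
    (t : ℝ) :
    exp (-(s * t)) * ∫ u in (0 : ℝ)..t, exp (2 * lam * (t - u)) * a u =
      ∫ u in (0 : ℝ)..t, exp ((2 * lam.im : ℝ) * (t - u) * I) * (exp (-(s * u)) * a u) := by
  rw [← intervalIntegral.integral_const_mul]
  congr 1 with u
  have hexp : exp (-(s * t)) * exp (2 * lam * (t - u)) =
      exp ((2 * lam.im : ℝ) * (t - u) * I) * exp (-(s * u)) := by
    have hlam : 2 * lam = s + (2 * lam.im : ℝ) * I := by
      apply Complex.ext
      · simp only [mul_re, re_ofNat, im_ofNat, hre, add_re, ofReal_re, ofReal_im, I_re, I_im]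
        ring
      · simp
    rw [← exp_add, ← exp_add, hlam]
    push_cast
    ring_nf
  rw [← mul_assoc, hexp, mul_assoc]

end

theorem tendsto_ofReal_inv_mul_of_eventually_norm_le {F : ℝ → ℂ} {M : ℝ}
    (hF : ∀ᶠ t in atTop, ‖F t‖ ≤ M) :
    Tendsto (fun t : ℝ => (t : ℂ)⁻¹ * F t) atTop (nhds 0) := by
  have hinv : Tendsto (fun t : ℝ => (t : ℂ)⁻¹) atTop (nhds 0) := by
    simpa [Function.comp_def] using
      (Complex.continuous_ofReal.tendsto 0).comp tendsto_inv_atTop_zero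
  exact hinv.zero_mul_isBoundedUnder_le ⟨M, hF⟩

/-- Let `B ∈ ℝ^{d×d}`, `s ∈ ℝ`, `Π ∈ ℝ^{d×d}`, and suppose
`‖e^{-su} e^{uB} - Π‖ ≤ C₁ e^{-C₂ u}` for all `u ≥ 0` (operator norm induced by the Euclidean
norm), for some `C₁, C₂ > 0`. If `λ ∈ ℂ` with `Re λ = s/2` and `Im λ ≠ 0`, then
`t⁻¹ e^{-st} ∫_0^t e^{2λ(t-u)} e^{uB} du → 0` as `t → ∞`, entrywise in `ℂ`. -/
theorem stmt17 (d : ℕ) (B : Matrix (Fin d) (Fin d) ℝ) (s : ℝ) (Pi : Matrix (Fin d) (Fin d) ℝ)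
    (hdecay : ∃ C₁ C₂ : ℝ, 0 < C₁ ∧ 0 < C₂ ∧ ∀ u : ℝ, 0 ≤ u →
      ‖Matrix.toEuclideanCLM (𝕜 := ℝ)
          (Real.exp (-(s * u)) • NormedSpace.exp (u • B) - Pi)‖ ≤ C₁ * Real.exp (-(C₂ * u)))
    (lam : ℂ) (hre : lam.re = s / 2) (him : lam.im ≠ 0) :
    ∀ i j : Fin d,
      Tendsto
        (fun t : ℝ => (t : ℂ)⁻¹ * (Complex.exp (-((s : ℂ) * t)) *
          ∫ u in (0:ℝ)..t,
            Complex.exp (2 * lam * ((t : ℂ) - (u : ℂ))) * ((NormedSpace.exp (u • B)) i j : ℂ)))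
        atTop (nhds 0) := by
  intro i j
  obtain ⟨C₁, C₂, -, hC₂, hdec⟩ := hdecay
  set f : ℝ → ℂ := fun u => Complex.exp (-(s * u)) * ((NormedSpace.exp (u • B)) i j : ℂ)
  have hf : Continuous f := (Complex.continuous_exp.comp (by fun_prop)).mul
    (Complex.continuous_ofReal.comp (B.continuous_exp_smul.matrix_elem i j))
  have hfdecay : ∀ u, 0 ≤ u → ‖f u - Pi i j‖ ≤ C₁ * Real.exp (-(C₂ * u)) := fun u hu => by
    have hcast :
        f u - Pi i j = ((Real.exp (-(s * u)) • NormedSpace.exp (u • B) - Pi) i j : ℝ) := by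
      simp [f]
    rw [hcast, Complex.norm_real]
    exact (Matrix.norm_apply_le_norm_toEuclideanCLM _ i j).trans (hdec u hu)
  apply tendsto_ofReal_inv_mul_of_eventually_norm_le
  filter_upwards [eventually_ge_atTop 0] with t ht
  rw [exp_neg_mul_integral_exp_two_mul hre]
  exact norm_integral_exp_mul_I_mul_le hf hC₂ (mul_ne_zero two_ne_zero him) ht hfdecay
end

section
/- Let d ∈ ℕ, B ∈ ℝ^{d×d}, s ∈ ℝ with s > 0, Π ∈ ℝ^{d×d}, and suppose there exist constants C₁, C₂ ∈ (0,∞) such that ‖e^{−su}e^{uB} − Π‖ ≤ C₁e^{−C₂u} for all u ≥ 0, where e^{uB} is the matrix exponential. Let λ ∈ ℂ with λ ≠ 0 and 2Re(λ) < s. Then, viewing matrices as complex matrices, e^{−st}∫_0^t e^{2λ(t−u)} (∫_0^u e^{wB} dw) du → Π/((s−2λ)s) as t → ∞ (entrywise convergence in ℂ^{d×d}). -/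
open MeasureTheory Filter Topology

/-! For `0 < Re a`, the averaging `g ↦ (t ↦ e^{-at} ∫₀ᵗ e^{au} g(u) du)` sends a function with
limit `L` at infinity to one with limit `L / a`: split the integral at a time after which `g` is
`ε`-close to `L`; the initial piece is killed by `e^{-at}`. With `H(u) = e^{-su} ∫₀ᵘ e^{wB} dw`,
`H` is the `a = s` average of `e^{-sw} e^{wB}`, which tends to `Π` entrywise by the decay bound,
so `H → Π / s`; the expression in the theorem is the `a = s - 2λ` average of `H`, whence the limit
`Π / ((s - 2λ) s)`. -/

namespace Matrix

variable {𝕜 : Type*} [RCLike 𝕜] {n : Type*} [Fintype n] [DecidableEq n]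

theorem norm_apply_le_norm_toEuclideanCLM_s18 (M : Matrix n n 𝕜) (i j : n) :
    ‖M i j‖ ≤ ‖toEuclideanCLM (n := n) (𝕜 := 𝕜) M‖ := by
  calc ‖M i j‖ = ‖toEuclideanCLM (𝕜 := 𝕜) M (WithLp.toLp 2 (Pi.single j 1)) i‖ := by simp
    _ ≤ ‖toEuclideanCLM (𝕜 := 𝕜) M (WithLp.toLp 2 (Pi.single j 1))‖ := PiLp.norm_apply_le _ i
    _ ≤ ‖toEuclideanCLM (n := n) (𝕜 := 𝕜) M‖ := by grw [ContinuousLinearMap.le_opNorm]; simp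

theorem tendsto_apply_of_tendsto_norm_toEuclideanCLM_sub {α : Type*} {l : Filter α}
    {M : α → Matrix n n 𝕜} {P : Matrix n n 𝕜}
    (hM : Tendsto (fun x => ‖toEuclideanCLM (n := n) (𝕜 := 𝕜) (M x - P)‖) l (𝓝 0)) (i j : n) :
    Tendsto (fun x => M x i j) l (𝓝 (P i j)) :=
  tendsto_iff_norm_sub_tendsto_zero.2 <| squeeze_zero (fun _ => norm_nonneg _)
    (fun x => norm_apply_le_norm_toEuclideanCLM_s18 (M x - P) i j) hM

theorem continuous_exp_smul_s18 (B : Matrix n n ℝ) :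
    Continuous fun t : ℝ => NormedSpace.exp (t • B) := by
  let := Matrix.instL2OpNormedRing (n := n) (𝕜 := ℝ)
  let := Matrix.instL2OpNormedAlgebra (n := n) (𝕜 := ℝ)
  exact (differentiable_exp_smul_const ℝ B).continuous

end Matrix

section

variable {E : Type*} [NormedAddCommGroup E] [NormedSpace ℂ E]

lemma Complex.norm_exp_mul_ofReal (a : ℂ) (t : ℝ) :
    ‖Complex.exp (a * t)‖ = Real.exp (a.re * t) := by
  simp [Complex.norm_exp]

lemma tendsto_cexp_neg_mul_ofReal_atTop {a : ℂ} (ha : 0 < a.re) :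
    Tendsto (fun t : ℝ => Complex.exp (-(a * t))) atTop (𝓝 0) := by
  rw [tendsto_zero_iff_norm_tendsto_zero]
  simp_rw [← neg_mul, Complex.norm_exp_mul_ofReal, Complex.neg_re, neg_mul]
  exact Real.tendsto_exp_atBot.comp (tendsto_neg_atTop_atBot.comp
    (tendsto_id.const_mul_atTop ha))

lemma cexp_neg_mul_mul_integral_cexp_mul {a : ℂ} (ha : a ≠ 0) (t : ℝ) :
    Complex.exp (-(a * t)) * ∫ u in (0 : ℝ)..t, Complex.exp (a * u) =
      (1 - Complex.exp (-(a * t))) / a := by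
  rw [integral_exp_mul_complex ha, Complex.ofReal_zero, mul_zero, Complex.exp_zero, mul_div_assoc',
    mul_sub, mul_one, ← Complex.exp_add, neg_add_cancel, Complex.exp_zero]

lemma norm_integral_cexp_mul_smul_le {a : ℂ} (ha : 0 < a.re) {g : ℝ → E} {T t δ : ℝ}
    (hTt : T ≤ t) (hδ : 0 ≤ δ) (hg : ∀ u ∈ Set.Ioc T t, ‖g u‖ ≤ δ) :
    ‖∫ u in T..t, Complex.exp (a * u) • g u‖ ≤ δ * Real.exp (a.re * t) / a.re := by
  have hexp_integral : ∫ u in T..t, δ * Real.exp (a.re * u) =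
      δ * (Real.exp (a.re * t) - Real.exp (a.re * T)) / a.re := by
    rw [intervalIntegral.integral_const_mul,
      intervalIntegral.integral_comp_mul_left (fun u => Real.exp u) ha.ne', integral_exp,
      smul_eq_mul]
    field_simp
  calc ‖∫ u in T..t, Complex.exp (a * u) • g u‖ ≤ ∫ u in T..t, δ * Real.exp (a.re * u) := by
        refine intervalIntegral.norm_integral_le_of_norm_le hTt (ae_of_all _ fun u hu => ?_)
          ((by fun_prop : Continuous fun u => δ * Real.exp (a.re * u)).intervalIntegrable _ _)
        rw [norm_smul, Complex.norm_exp_mul_ofReal, mul_comm]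
        exact mul_le_mul_of_nonneg_right (hg u hu) (Real.exp_nonneg _)
    _ ≤ δ * Real.exp (a.re * t) / a.re := by
        rw [hexp_integral]
        gcongr
        linarith [Real.exp_pos (a.re * T)]

lemma tendsto_cexp_neg_mul_smul_integral_of_tendsto_zero [CompleteSpace E] {a : ℂ}
    (ha : 0 < a.re) {g : ℝ → E} (hg : Continuous g) (hg0 : Tendsto g atTop (𝓝 0)) :
    Tendsto (fun t : ℝ => Complex.exp (-(a * t)) • ∫ u in (0 : ℝ)..t, Complex.exp (a * u) • g u)
      atTop (𝓝 0) := by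
  rw [Metric.tendsto_nhds]
  intro ε hε
  have hδ : 0 < ε * a.re / 2 := by positivity
  obtain ⟨T, hT⟩ := eventually_atTop.1
    ((tendsto_zero_iff_norm_tendsto_zero.1 hg0).eventually_le_const hδ)
  set K := ∫ u in (0 : ℝ)..T, Complex.exp (a * u) • g u
  have hK : ∀ᶠ t : ℝ in atTop, ‖Complex.exp (-(a * t)) • K‖ < ε / 2 := by
    have := ((tendsto_cexp_neg_mul_ofReal_atTop ha).smul_const K).norm
    rw [zero_smul, norm_zero] at this
    exact this.eventually_lt_const (by positivity)
  have hcont : Continuous fun u : ℝ => Complex.exp (a * u) • g u := by fun_prop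
  filter_upwards [hK, eventually_ge_atTop T] with t hKt hTt
  have htail : ‖Complex.exp (-(a * t)) • ∫ u in T..t, Complex.exp (a * u) • g u‖ ≤ ε / 2 := by
    rw [norm_smul, ← neg_mul, Complex.norm_exp_mul_ofReal]
    calc Real.exp ((-a).re * t) * ‖∫ u in T..t, Complex.exp (a * u) • g u‖
        ≤ Real.exp ((-a).re * t) * (ε * a.re / 2 * Real.exp (a.re * t) / a.re) := by
          gcongr
          exact norm_integral_cexp_mul_smul_le ha hTt hδ.le fun u hu => hT u hu.1.le
      _ = ε / 2 := by
          rw [Complex.neg_re, neg_mul, Real.exp_neg]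
          field_simp
  rw [dist_zero_right, ← intervalIntegral.integral_add_adjacent_intervals
    (hcont.intervalIntegrable 0 T) (hcont.intervalIntegrable T t), smul_add]
  calc _ ≤ _ := norm_add_le _ _
    _ < ε / 2 + ε / 2 := add_lt_add_of_lt_of_le hKt htail
    _ = ε := add_halves ε

theorem tendsto_cexp_neg_mul_smul_integral_cexp_mul_smul [CompleteSpace E] {a : ℂ}
    (ha : 0 < a.re) {g : ℝ → E} (hg : Continuous g) {L : E} (hL : Tendsto g atTop (𝓝 L)) :
    Tendsto (fun t : ℝ => Complex.exp (-(a * t)) • ∫ u in (0 : ℝ)..t, Complex.exp (a * u) • g u)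
      atTop (𝓝 (a⁻¹ • L)) := by
  have ha0 : a ≠ 0 := fun h => by simp [h] at ha
  have hsplit : ∀ t : ℝ,
      Complex.exp (-(a * t)) • ∫ u in (0 : ℝ)..t, Complex.exp (a * u) • g u =
        Complex.exp (-(a * t)) • (∫ u in (0 : ℝ)..t, Complex.exp (a * u) • (g u - L)) +
          ((1 - Complex.exp (-(a * t))) / a) • L := by
    intro t
    have hi : IntervalIntegrable (fun u : ℝ => Complex.exp (a * u) • (g u - L)) volume 0 t :=
      (by fun_prop : Continuous fun u : ℝ => Complex.exp (a * u) • (g u - L)).intervalIntegrable _ _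
    have hi' : IntervalIntegrable (fun u : ℝ => Complex.exp (a * u) • L) volume 0 t :=
      (by fun_prop : Continuous fun u : ℝ => Complex.exp (a * u) • L).intervalIntegrable _ _
    rw [← cexp_neg_mul_mul_integral_cexp_mul ha0, mul_smul, ← intervalIntegral.integral_smul_const,
      ← smul_add, ← intervalIntegral.integral_add hi hi']
    simp only [smul_sub, sub_add_cancel]
  have hconst : Tendsto (fun t : ℝ => (1 - Complex.exp (-(a * t))) / a) atTop (𝓝 a⁻¹) := by
    simpa [one_div] using ((tendsto_cexp_neg_mul_ofReal_atTop ha).const_sub 1).div_const a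
  simpa [hsplit] using (tendsto_cexp_neg_mul_smul_integral_of_tendsto_zero ha
    (hg.sub continuous_const) (tendsto_sub_nhds_zero_iff.2 hL)).add (hconst.smul_const L)

theorem tendsto_cexp_neg_mul_smul_integral_cexp_mul_sub_smul_integral [CompleteSpace E]
    {s c : ℂ} (hs : 0 < s.re) (hcs : c.re < s.re) {f : ℝ → E} (hf : Continuous f) {L : E}
    (hL : Tendsto (fun u : ℝ => Complex.exp (-(s * u)) • f u) atTop (𝓝 L)) :
    Tendsto (fun t : ℝ => Complex.exp (-(s * t)) •
        ∫ u in (0 : ℝ)..t, Complex.exp (c * (t - u)) • ∫ w in (0 : ℝ)..u, f w)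
      atTop (𝓝 (((s - c) * s)⁻¹ • L)) := by
  set H : ℝ → E := fun u => Complex.exp (-(s * u)) • ∫ w in (0 : ℝ)..u, f w
  have hH : Tendsto H atTop (𝓝 (s⁻¹ • L)) := by
    refine (tendsto_cexp_neg_mul_smul_integral_cexp_mul_smul hs (by fun_prop) hL).congr fun u => ?_
    simp only [smul_smul, ← Complex.exp_add, add_neg_cancel, Complex.exp_zero, one_smul, H]
  have hHc : Continuous H :=
    (by fun_prop : Continuous fun u : ℝ => Complex.exp (-(s * u))).smul
      (intervalIntegral.continuous_primitive (fun _ _ => hf.intervalIntegrable _ _) 0)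
  have hsc : 0 < (s - c).re := by rw [Complex.sub_re]; linarith
  rw [mul_inv, mul_smul]
  refine (tendsto_cexp_neg_mul_smul_integral_cexp_mul_smul hsc hHc hH).congr fun t => ?_
  rw [← intervalIntegral.integral_smul, ← intervalIntegral.integral_smul]
  refine intervalIntegral.integral_congr fun u _ => ?_
  simp only [H, smul_smul, ← Complex.exp_add]
  ring_nf

end

theorem stmt18_general (d : ℕ) (B : Matrix (Fin d) (Fin d) ℝ) (s : ℝ) (hs : 0 < s)
    (Pi : Matrix (Fin d) (Fin d) ℝ)
    (hdecay : ∃ C₁ C₂ : ℝ, 0 < C₁ ∧ 0 < C₂ ∧ ∀ u : ℝ, 0 ≤ u →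
      ‖Matrix.toEuclideanCLM (𝕜 := ℝ)
          (Real.exp (-(s * u)) • NormedSpace.exp (u • B) - Pi)‖ ≤ C₁ * Real.exp (-(C₂ * u)))
    (lam : ℂ) (hlam : 2 * lam.re < s) :
    ∀ i j : Fin d,
      Tendsto
        (fun t : ℝ => Complex.exp (-((s : ℂ) * t)) *
          ∫ u in (0:ℝ)..t,
            Complex.exp (2 * lam * ((t : ℂ) - (u : ℂ))) *
              ((∫ w in (0:ℝ)..u, (NormedSpace.exp (w • B)) i j : ℝ) : ℂ))
        atTop (nhds ((Pi i j : ℂ) / (((s : ℂ) - 2 * lam) * (s : ℂ)))) := by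
  obtain ⟨C₁, C₂, -, hC₂, hbound⟩ := hdecay
  intro i j
  have hdecay_zero : Tendsto (fun u : ℝ => C₁ * Real.exp (-(C₂ * u))) atTop (𝓝 0) := by
    simpa using (Real.tendsto_exp_atBot.comp (tendsto_neg_atTop_atBot.comp
      (tendsto_id.const_mul_atTop hC₂))).const_mul C₁
  have hentry : Tendsto (fun u : ℝ => Real.exp (-(s * u)) * NormedSpace.exp (u • B) i j) atTop
      (𝓝 (Pi i j)) :=
    Matrix.tendsto_apply_of_tendsto_norm_toEuclideanCLM_sub (squeeze_zero' (.of_forall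
      fun _ => norm_nonneg _) (eventually_ge_atTop 0 |>.mono hbound) hdecay_zero) i j
  have hentry_cont : Continuous fun w : ℝ => (NormedSpace.exp (w • B) i j : ℂ) :=
    Complex.continuous_ofReal.comp ((Matrix.continuous_exp_smul_s18 B).matrix_elem i j)
  have := tendsto_cexp_neg_mul_smul_integral_cexp_mul_sub_smul_integral (s := s) (c := 2 * lam)
    (by simpa using hs) (by simpa using hlam) hentry_cont
    (L := (Pi i j : ℂ)) (by
      simpa [Function.comp_def] using (Complex.continuous_ofReal.tendsto _).comp hentry)
  simpa [intervalIntegral.integral_ofReal, div_eq_inv_mul] using this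

/-- Let `B ∈ ℝ^{d×d}`, `s > 0`, `Π ∈ ℝ^{d×d}`, and suppose
`‖e^{-su} e^{uB} - Π‖ ≤ C₁ e^{-C₂ u}` for all `u ≥ 0` (operator norm induced by the Euclidean
norm), for some `C₁, C₂ > 0`. If `λ ∈ ℂ` with `λ ≠ 0` and `2 Re λ < s`, then
`e^{-st} ∫_0^t e^{2λ(t-u)} (∫_0^u e^{wB} dw) du → Π/((s-2λ)s)` as `t → ∞`, entrywise in `ℂ`. -/
theorem stmt18 (d : ℕ) (B : Matrix (Fin d) (Fin d) ℝ) (s : ℝ) (hs : 0 < s)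
    (Pi : Matrix (Fin d) (Fin d) ℝ)
    (hdecay : ∃ C₁ C₂ : ℝ, 0 < C₁ ∧ 0 < C₂ ∧ ∀ u : ℝ, 0 ≤ u →
      ‖Matrix.toEuclideanCLM (𝕜 := ℝ)
          (Real.exp (-(s * u)) • NormedSpace.exp (u • B) - Pi)‖ ≤ C₁ * Real.exp (-(C₂ * u)))
    (lam : ℂ) (hlam0 : lam ≠ 0) (hlam : 2 * lam.re < s) :
    ∀ i j : Fin d,
      Tendsto
        (fun t : ℝ => Complex.exp (-((s : ℂ) * t)) *
          ∫ u in (0:ℝ)..t,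
            Complex.exp (2 * lam * ((t : ℂ) - (u : ℂ))) *
              ((∫ w in (0:ℝ)..u, (NormedSpace.exp (w • B)) i j : ℝ) : ℂ))
        atTop (nhds ((Pi i j : ℂ) / (((s : ℂ) - 2 * lam) * (s : ℂ)))) :=
  stmt18_general d B s hs Pi hdecay lam hlam
end
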